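/- arXiv:1806.08608 — 5 statements merged into one kernel-verified Lean document; each statement's English description precedes it below -/
import Mathlib

section
/- If (U_n) is a sequence of random variables with a common expectation μ, Var(U_n) ≤ C for all n, and |Cov(U_j, U_k)| ≤ g(|k−j|) where g(i) → 0 as i → ∞, then (1/n) ∑_{k=1}^n U_k → μ in probability. -/
open MeasureTheory ProbabilityTheory Filter Finset Topology

/-!
By Chebyshev's inequality it suffices that the variance of the average `Aₙ` tends to zero.
That variance is `n⁻² ∑ⱼ ∑ₖ Cov(Uⱼ, Uₖ)`; each row contributes at most `C` on the diagonal
and `2 ∑_{d ≤ n} |g d|` off it, so `Var Aₙ ≤ (C + 2 ∑_{d ≤ n} |g d|) / n`, which tends to zero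
because Cesàro means of `|g|` inherit its limit `0`.
-/

lemma Finset.sum_comp_le_sum_of_injOn {ι κ : Type*} {s : Finset ι} {t : Finset κ}
    {f : κ → ℝ} {h : ι → κ} (hinj : Set.InjOn h s) (hmaps : Set.MapsTo h s t)
    (hf : ∀ d ∈ t, 0 ≤ f d) :
    ∑ k ∈ s, f (h k) ≤ ∑ d ∈ t, f d := by
  classical
  rw [← sum_image hinj]
  exact sum_le_sum_of_subset_of_nonneg (image_subset_iff.mpr hmaps) fun d hd _ ↦ hf d hd

lemma sum_erase_abs_natAbs_sub_le (g : ℕ → ℝ) {n j : ℕ} (hj : j ∈ Icc 1 n) :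
    ∑ k ∈ (Icc 1 n).erase j, |g ((k : ℤ) - j).natAbs| ≤ 2 * ∑ d ∈ Icc 1 n, |g d| := by
  have hmaps : Set.MapsTo (fun k : ℕ ↦ ((k : ℤ) - j).natAbs) ((Icc 1 n).erase j) (Icc 1 n) := by
    intro k hk
    simp only [coe_erase, coe_Icc, Set.mem_sdiff, Set.mem_Icc, Set.mem_singleton_iff] at hk
    simp only [coe_Icc, Set.mem_Icc]
    rw [mem_Icc] at hj
    omega
  have half (s : Finset ℕ) (hs : s ⊆ (Icc 1 n).erase j)
      (hinj : Set.InjOn (fun k : ℕ ↦ ((k : ℤ) - j).natAbs) s) :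
      ∑ k ∈ s, |g ((k : ℤ) - j).natAbs| ≤ ∑ d ∈ Icc 1 n, |g d| :=
    sum_comp_le_sum_of_injOn (f := fun d ↦ |g d|) hinj (hmaps.mono (coe_subset.2 hs) subset_rfl)
      fun _ _ ↦ abs_nonneg _
  -- `k ↦ |k - j|` is injective on either side of `j`.
  rw [← sum_filter_add_sum_filter_not _ (· < j), two_mul]
  refine add_le_add (half _ (filter_subset _ _) ?_) (half _ (filter_subset _ _) ?_) <;>
  · intro k hk l hl hkl
    simp only [coe_filter, mem_erase, Set.mem_ofPred_eq] at hk hl hkl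
    omega

lemma sum_sum_le_of_abs_le (c : ℕ → ℕ → ℝ) (g : ℕ → ℝ) (C : ℝ) (n : ℕ)
    (hdiag : ∀ j, c j j ≤ C) (hoff : ∀ j k, j ≠ k → |c j k| ≤ g ((k : ℤ) - j).natAbs) :
    ∑ j ∈ Icc 1 n, ∑ k ∈ Icc 1 n, c j k ≤ n * (C + 2 * ∑ d ∈ Icc 1 n, |g d|) := by
  have hrow : ∀ j ∈ Icc 1 n, ∑ k ∈ Icc 1 n, c j k ≤ C + 2 * ∑ d ∈ Icc 1 n, |g d| := by
    intro j hj
    rw [← add_sum_erase _ _ hj]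
    gcongr
    · exact hdiag j
    refine (sum_le_sum fun k hk ↦ ?_).trans (sum_erase_abs_natAbs_sub_le g hj)
    exact (le_abs_self _).trans ((hoff j k (ne_of_mem_erase hk).symm).trans (le_abs_self _))
  calc ∑ j ∈ Icc 1 n, ∑ k ∈ Icc 1 n, c j k
      ≤ ∑ _j ∈ Icc 1 n, (C + 2 * ∑ d ∈ Icc 1 n, |g d|) := sum_le_sum hrow
    _ = n * (C + 2 * ∑ d ∈ Icc 1 n, |g d|) := by simp [mul_add]

lemma Filter.Tendsto.cesaro_Icc {u : ℕ → ℝ} {l : ℝ} (h : Tendsto u atTop (𝓝 l)) :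
    Tendsto (fun n : ℕ ↦ (n⁻¹ : ℝ) * ∑ d ∈ Icc 1 n, u d) atTop (𝓝 l) := by
  convert (h.comp (tendsto_add_atTop_nat 1)).cesaro using 3 with n
  rw [← Ico_add_one_right_eq_Icc, sum_Ico_eq_sum_range]
  simp [add_comm]

lemma variance_fun_sum_div {Ω ι : Type*} [MeasurableSpace Ω] {μ : Measure Ω} [IsFiniteMeasure μ]
    {X : ι → Ω → ℝ} {s : Finset ι} (hX : ∀ i ∈ s, MemLp (X i) 2 μ) (c : ℝ) :
    Var[fun ω ↦ (∑ i ∈ s, X i ω) / c; μ] = (∑ i ∈ s, ∑ j ∈ s, cov[X i, X j; μ]) / c ^ 2 := by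
  have hsum : MemLp (fun ω ↦ ∑ i ∈ s, X i ω) 2 μ := memLp_finsetSum s hX
  rw [← covariance_self (hsum.aemeasurable.div_const c), covariance_fun_div_left,
    covariance_fun_div_right, covariance_fun_sum_fun_sum' hX hX, div_div, sq]

lemma tendsto_measure_lt_abs_sub_of_tendsto_variance {Ω ι : Type*} [MeasurableSpace Ω]
    {μ : Measure Ω} [IsFiniteMeasure μ] {l : Filter ι} {X : ι → Ω → ℝ} {m : ℝ}
    (hX : ∀ i, MemLp (X i) 2 μ) (hmean : ∀ᶠ i in l, μ[X i] = m)
    (hvar : Tendsto (fun i ↦ Var[X i; μ]) l (𝓝 0)) {ε : ℝ} (hε : 0 < ε) :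
    Tendsto (fun i ↦ μ {ω | ε < |X i ω - m|}) l (𝓝 0) := by
  have hbound : Tendsto (fun i ↦ ENNReal.ofReal (Var[X i; μ] / ε ^ 2)) l (𝓝 0) := by
    simpa using ENNReal.tendsto_ofReal (hvar.div_const (ε ^ 2))
  refine tendsto_of_tendsto_of_tendsto_of_le_of_le' tendsto_const_nhds hbound
    (Eventually.of_forall fun _ ↦ zero_le) ?_
  filter_upwards [hmean] with i hi
  calc μ {ω | ε < |X i ω - m|} ≤ μ {ω | ε ≤ |X i ω - μ[X i]|} :=
        measure_mono fun ω hω ↦ by rw [Set.mem_ofPred_eq, hi]; exact le_of_lt hω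
    _ ≤ _ := meas_ge_le_variance_div_sq (hX i) hε

theorem stmt_0_general {Ω : Type*} [MeasurableSpace Ω] (P : Measure Ω) [IsProbabilityMeasure P]
    (U : ℕ → Ω → ℝ) (m C : ℝ) (g : ℕ → ℝ)
    (hL2 : ∀ n, MemLp (U n) 2 P)
    (hmean : ∀ n, ∫ ω, U n ω ∂P = m)
    (hvar : ∀ n, ∫ ω, (U n ω - m) ^ 2 ∂P ≤ C)
    (hcov : ∀ j k : ℕ, j ≠ k →
      |∫ ω, (U j ω - m) * (U k ω - m) ∂P| ≤ g ((k : ℤ) - (j : ℤ)).natAbs)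
    (hg : Tendsto g atTop (nhds 0)) :
    ∀ ε : ℝ, 0 < ε →
      Tendsto (fun n : ℕ =>
          P {ω | ε < |(∑ k ∈ Finset.Icc 1 n, U k ω) / (n : ℝ) - m|})
        atTop (nhds 0) := by
  intro ε hε
  set A : ℕ → Ω → ℝ := fun n ω ↦ (∑ k ∈ Icc 1 n, U k ω) / n
  have hcov_eq : ∀ j k, cov[U j, U k; P] = ∫ ω, (U j ω - m) * (U k ω - m) ∂P := by
    intro j k
    rw [covariance, hmean, hmean]
  have hA_mean : ∀ᶠ n in atTop, P[A n] = m := by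
    filter_upwards [eventually_ne_atTop 0] with n hn
    simp only [A, integral_div, integral_finsetSum _ fun k _ ↦ (hL2 k).integrable one_le_two,
      hmean, sum_const, Nat.card_Icc, add_tsub_cancel_right, nsmul_eq_mul]
    field_simp
  have hA_var : ∀ n, Var[A n; P] ≤ n * (C + 2 * ∑ d ∈ Icc 1 n, |g d|) / n ^ 2 := by
    intro n
    rw [variance_fun_sum_div fun k _ ↦ hL2 k]
    gcongr
    refine sum_sum_le_of_abs_le _ g C n (fun j ↦ ?_) fun j k hjk ↦ ?_
    · simpa [hcov_eq, sq] using hvar j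
    · simpa [hcov_eq] using hcov j k hjk
  have hbound : Tendsto (fun n : ℕ ↦ n * (C + 2 * ∑ d ∈ Icc 1 n, |g d|) / n ^ 2) atTop (𝓝 0) := by
    have hS : Tendsto (fun n : ℕ ↦ (n⁻¹ : ℝ) * ∑ d ∈ Icc 1 n, |g d|) atTop (𝓝 0) := by
      simpa using hg.abs.cesaro_Icc
    have hlim := (tendsto_inv_atTop_nhds_zero_nat.mul_const C).add (hS.const_mul 2)
    rw [zero_mul, mul_zero, add_zero] at hlim
    refine hlim.congr' ?_
    filter_upwards [eventually_ne_atTop 0] with n hn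
    field_simp
  refine tendsto_measure_lt_abs_sub_of_tendsto_variance (fun n ↦ ?_) hA_mean ?_ hε
  · simpa only [A, div_eq_mul_inv] using (memLp_finsetSum (Icc 1 n) fun k _ ↦ hL2 k).mul_const _
  · exact tendsto_of_tendsto_of_tendsto_of_le_of_le tendsto_const_nhds hbound
      (fun n ↦ variance_nonneg _ _) hA_var

/-- Law of large numbers under vanishing covariances: convergence in probability. -/
theorem stmt_0 {Ω : Type*} [MeasurableSpace Ω] (P : Measure Ω) [IsProbabilityMeasure P]
    (U : ℕ → Ω → ℝ) (m C : ℝ) (g : ℕ → ℝ)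
    (hmeas : ∀ n, Measurable (U n))
    (hL2 : ∀ n, MemLp (U n) 2 P)
    (hmean : ∀ n, ∫ ω, U n ω ∂P = m)
    (hvar : ∀ n, ∫ ω, (U n ω - m) ^ 2 ∂P ≤ C)
    (hcov : ∀ j k : ℕ, j ≠ k →
      |∫ ω, (U j ω - m) * (U k ω - m) ∂P| ≤ g ((k : ℤ) - (j : ℤ)).natAbs)
    (hg : Tendsto g atTop (nhds 0)) :
    ∀ ε : ℝ, 0 < ε →
      Tendsto (fun n : ℕ =>
          P {ω | ε < |(∑ k ∈ Finset.Icc 1 n, U k ω) / (n : ℝ) - m|})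
        atTop (nhds 0) :=
  stmt_0_general P U m C g hL2 hmean hvar hcov hg
end

section
/- Consider the generalized ARCH model X_t = σ_t ε_t, σ_t² = α_0 + α_1 X_{t−1}² + l_1 L_{t−1}, where α_0 ≥ 0, α_1, l_1 > 0, α_1 < 1, (ε_t) is i.i.d. with mean 0 and E[ε_0²] = 1, and (L_t) is a strictly stationary positive process with E[L_0] = 1, E[L_0²] < ∞, independent of (ε_t). Then σ_{t+1}² = ∑_{i=0}^∞ (∏_{j=0}^{i−1} α_1 ε_{t−j}²)(α_0 + l_1 L_{t−i}) converges almost surely and defines a strictly stationary solution of the recursion σ_{t+1}² = α_1 ε_t² σ_t² + α_0 + l_1 L_t. -/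
/-!
All terms of the series are nonnegative, so it converges almost surely as soon as its expected
sum is finite. The product of the `ε`-factors is independent of the `L`-factor, and the `ε`-factors
are independent with `E[α₁ ε²] = α₁`, so the `i`-th term has expectation `α₁ ^ i (α₀ + l₁)`: a
geometric series, since `α₁ < 1`. Splitting off the term `i = 0` gives the recursion. The series
is one measurable map of the pair of paths `(ε, L)` that commutes with time shifts, and the law of
that pair is shift invariant (`ε` is i.i.d., `L` is stationary, the two are independent), so the
solution is strictly stationary.
-/

open MeasureTheory Filter ProbabilityTheory Finset
open scoped ENNReal

section Deterministic

variable (α₀ α₁ l₁ : ℝ) (e l : ℤ → ℝ)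

def archTerm (t : ℤ) (i : ℕ) : ℝ :=
  (∏ j ∈ range i, α₁ * e (t - 1 - j) ^ 2) * (α₀ + l₁ * l (t - 1 - i))

noncomputable def archSolution (t : ℤ) : ℝ :=
  ∑' i, archTerm α₀ α₁ l₁ e l t i

variable {α₀ α₁ l₁ e l}

theorem archTerm_nonneg (hα₀ : 0 ≤ α₀) (hα₁ : 0 ≤ α₁) (hl₁ : 0 ≤ l₁) (hl : ∀ s, 0 ≤ l s)
    (t : ℤ) (i : ℕ) : 0 ≤ archTerm α₀ α₁ l₁ e l t i :=
  mul_nonneg (prod_nonneg fun _ _ => by positivity) (by have := hl (t - 1 - i); positivity)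

theorem archTerm_succ_zero (t : ℤ) : archTerm α₀ α₁ l₁ e l (t + 1) 0 = α₀ + l₁ * l t := by
  simp [archTerm]

theorem archTerm_succ_succ (t : ℤ) (i : ℕ) :
    archTerm α₀ α₁ l₁ e l (t + 1) (i + 1) = α₁ * e t ^ 2 * archTerm α₀ α₁ l₁ e l t i := by
  simp only [archTerm, prod_range_succ', Nat.cast_add, Nat.cast_one, Nat.cast_zero]
  ring_nf

theorem archSolution_succ {t : ℤ} (h : Summable (archTerm α₀ α₁ l₁ e l (t + 1))) :
    archSolution α₀ α₁ l₁ e l (t + 1) =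
      α₁ * e t ^ 2 * archSolution α₀ α₁ l₁ e l t + α₀ + l₁ * l t := by
  rw [archSolution, h.tsum_eq_zero_add, archSolution, ← tsum_mul_left, archTerm_succ_zero]
  simp only [archTerm_succ_succ]
  ring

theorem archSolution_shift (k t : ℤ) :
    archSolution α₀ α₁ l₁ (fun s => e (s + k)) (fun s => l (s + k)) t =
      archSolution α₀ α₁ l₁ e l (t + k) := by
  simp only [archSolution, archTerm, sub_add_eq_add_sub]

variable (α₀ α₁ l₁)

theorem measurable_archTerm (t : ℤ) (i : ℕ) :
    Measurable fun p : (ℤ → ℝ) × (ℤ → ℝ) => archTerm α₀ α₁ l₁ p.1 p.2 t i := by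
  unfold archTerm
  fun_prop

theorem measurable_archSolution :
    Measurable fun p : (ℤ → ℝ) × (ℤ → ℝ) => archSolution α₀ α₁ l₁ p.1 p.2 :=
  measurable_pi_lambda _ fun t => Measurable.tsum (measurable_archTerm α₀ α₁ l₁ t)

end Deterministic

section Probability

variable {Ω : Type*} [MeasurableSpace Ω] {P : Measure Ω}

theorem lintegral_ofReal_eq_one_of_identDistrib {X : ℤ → Ω → ℝ} {g : ℝ → ℝ} (hg : Measurable g)
    (hX : ∀ s, IdentDistrib (X s) (X 0) P P) (hg0 : ∀ ω, 0 ≤ g (X 0 ω))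
    (h : ∫ ω, g (X 0 ω) ∂P = 1) (s : ℤ) : ∫⁻ ω, ENNReal.ofReal (g (X s ω)) ∂P = 1 := by
  have hint : Integrable (fun ω => g (X 0 ω)) P := .of_integral_ne_zero (by simp [h])
  calc ∫⁻ ω, ENNReal.ofReal (g (X s ω)) ∂P = ∫⁻ ω, ENNReal.ofReal (g (X 0 ω)) ∂P :=
        ((hX s).comp hg.ennreal_ofReal).lintegral_eq
    _ = ENNReal.ofReal (∫ ω, g (X 0 ω) ∂P) :=
        (ofReal_integral_eq_lintegral_ofReal hint (ae_of_all _ hg0)).symm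
    _ = 1 := by rw [h, ENNReal.ofReal_one]

theorem ae_summable_of_tsum_lintegral_ne_top {f : ℕ → Ω → ℝ} (hf_nonneg : ∀ i ω, 0 ≤ f i ω)
    (hf : ∀ i, AEMeasurable (f i) P) (h : ∑' i, ∫⁻ ω, ENNReal.ofReal (f i ω) ∂P ≠ ∞) :
    ∀ᵐ ω ∂P, Summable fun i => f i ω := by
  rw [← lintegral_tsum fun i => (hf i).ennreal_ofReal] at h
  filter_upwards [ae_lt_top' (AEMeasurable.tsum fun i => (hf i).ennreal_ofReal) h] with ω hω
  exact (ENNReal.summable_toReal hω.ne).congr fun i => ENNReal.toReal_ofReal (hf_nonneg i ω)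

theorem identDistrib_prodMk_shift [IsProbabilityMeasure P] {E F : Type*} [MeasurableSpace E]
    [MeasurableSpace F] {X : ℤ → Ω → E} {Y : ℤ → Ω → F} (hXindep : iIndepFun X P)
    (hXident : ∀ t, IdentDistrib (X t) (X 0) P P)
    (hYshift : ∀ k, IdentDistrib (fun ω t => Y (t + k) ω) (fun ω t => Y t ω) P P)
    (hindep : IndepFun (fun ω t => X t ω) (fun ω t => Y t ω) P) (k : ℤ) :
    IdentDistrib (fun ω => ((fun t => X (t + k) ω), fun t => Y (t + k) ω))
      (fun ω => ((fun t => X t ω), fun t => Y t ω)) P P := by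
  have hindep_shift : IndepFun (fun ω t => X (t + k) ω) (fun ω t => Y (t + k) ω) P :=
    hindep.comp (φ := fun (x : ℤ → E) t => x (t + k)) (ψ := fun (y : ℤ → F) t => y (t + k))
      (by fun_prop) (by fun_prop)
  refine .prodMk ?_ (hYshift k) hindep_shift hindep
  exact .pi (fun t => (hXident (t + k)).trans (hXident t).symm)
    (hXindep.precomp (add_left_injective k)) hXindep

variable {ε L : ℤ → Ω → ℝ} {α₀ α₁ l₁ : ℝ}

theorem lintegral_prod_ofReal_mul_sq (hα₁ : 0 ≤ α₁) (hεmeas : ∀ t, Measurable (ε t))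
    (hεindep : iIndepFun ε P) (hε2 : ∀ s, ∫⁻ ω, ENNReal.ofReal (ε s ω ^ 2) ∂P = 1)
    (t : ℤ) (i : ℕ) :
    ∫⁻ ω, ∏ j ∈ range i, ENNReal.ofReal (α₁ * ε (t - 1 - j) ω ^ 2) ∂P = ENNReal.ofReal α₁ ^ i := by
  have hinj : Set.InjOn (fun j : ℕ => t - 1 - (j : ℤ)) (range i) := fun x _ y _ h => by
    simpa using h
  have hf : iIndepFun (fun s ω => ENNReal.ofReal (α₁ * ε s ω ^ 2)) P :=
    hεindep.comp (fun _ x => ENNReal.ofReal (α₁ * x ^ 2)) fun _ => by fun_prop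
  rw [lintegral_congr fun ω =>
      (prod_image (f := fun s => ENNReal.ofReal (α₁ * ε s ω ^ 2)) hinj).symm,
    lintegral_prod_eq_prod_lintegral_of_indepFun _ _ hf fun s => by fun_prop, prod_image hinj]
  simp_rw [ENNReal.ofReal_mul hα₁]
  rw [prod_congr rfl fun j _ => by rw [lintegral_const_mul _ (by fun_prop), hε2, mul_one]]
  simp

theorem lintegral_ofReal_archTerm [IsProbabilityMeasure P]
    (hα₀ : 0 ≤ α₀) (hα₁ : 0 ≤ α₁) (hl₁ : 0 ≤ l₁)
    (hεmeas : ∀ t, Measurable (ε t)) (hLmeas : ∀ t, Measurable (L t))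
    (hLnonneg : ∀ t ω, 0 ≤ L t ω) (hεindep : iIndepFun ε P)
    (hindep : IndepFun (fun ω t => ε t ω) (fun ω t => L t ω) P)
    (hε2 : ∀ s, ∫⁻ ω, ENNReal.ofReal (ε s ω ^ 2) ∂P = 1)
    (hL1 : ∀ s, ∫⁻ ω, ENNReal.ofReal (L s ω) ∂P = 1) (t : ℤ) (i : ℕ) :
    ∫⁻ ω, ENNReal.ofReal (archTerm α₀ α₁ l₁ (ε · ω) (L · ω) t i) ∂P =
      ENNReal.ofReal α₁ ^ i * ENNReal.ofReal (α₀ + l₁) := by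
  set F : (ℤ → ℝ) → ℝ≥0∞ := fun e => ∏ j ∈ range i, ENNReal.ofReal (α₁ * e (t - 1 - j) ^ 2)
  set G : (ℤ → ℝ) → ℝ≥0∞ := fun l => ENNReal.ofReal (α₀ + l₁ * l (t - 1 - i))
  have hF : Measurable F := by fun_prop
  have hG : Measurable G := by fun_prop
  have hsplit : ∀ ω, ENNReal.ofReal (archTerm α₀ α₁ l₁ (ε · ω) (L · ω) t i) =
      F (ε · ω) * G (L · ω) := fun ω => by
    rw [archTerm, ENNReal.ofReal_mul (prod_nonneg fun _ _ => by positivity),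
      ENNReal.ofReal_prod_of_nonneg fun _ _ => by positivity]
  have hG1 : ∫⁻ ω, G (L · ω) ∂P = ENNReal.ofReal (α₀ + l₁) := by
    simp_rw [G, ENNReal.ofReal_add hα₀ (mul_nonneg hl₁ (hLnonneg _ _)), ENNReal.ofReal_mul hl₁]
    rw [lintegral_add_left measurable_const, lintegral_const_mul _ (by fun_prop), hL1,
      lintegral_const, measure_univ, mul_one, mul_one, ENNReal.ofReal_add hα₀ hl₁]
  have hFG : IndepFun (fun ω => F (ε · ω)) (fun ω => G (L · ω)) P := hindep.comp hF hG
  rw [lintegral_congr hsplit, lintegral_mul_eq_lintegral_mul_lintegral_of_indepFun''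
    (by fun_prop) (by fun_prop) hFG,
    lintegral_prod_ofReal_mul_sq hα₁ hεmeas hεindep hε2, hG1]

theorem ae_summable_archTerm [IsProbabilityMeasure P]
    (hα₀ : 0 ≤ α₀) (hα₁ : 0 ≤ α₁) (hl₁ : 0 ≤ l₁) (hα₁' : α₁ < 1)
    (hεmeas : ∀ t, Measurable (ε t)) (hLmeas : ∀ t, Measurable (L t))
    (hLnonneg : ∀ t ω, 0 ≤ L t ω) (hεindep : iIndepFun ε P)
    (hindep : IndepFun (fun ω t => ε t ω) (fun ω t => L t ω) P)
    (hε2 : ∀ s, ∫⁻ ω, ENNReal.ofReal (ε s ω ^ 2) ∂P = 1)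
    (hL1 : ∀ s, ∫⁻ ω, ENNReal.ofReal (L s ω) ∂P = 1) (t : ℤ) :
    ∀ᵐ ω ∂P, Summable (archTerm α₀ α₁ l₁ (ε · ω) (L · ω) t) := by
  refine ae_summable_of_tsum_lintegral_ne_top
    (fun i ω => archTerm_nonneg hα₀ hα₁ hl₁ (hLnonneg · ω) t i)
    (fun i => ((measurable_archTerm α₀ α₁ l₁ t i).comp
      (f := fun ω => ((ε · ω), (L · ω))) (by fun_prop)).aemeasurable) ?_
  simp_rw [lintegral_ofReal_archTerm hα₀ hα₁ hl₁ hεmeas hLmeas hLnonneg hεindep hindep hε2 hL1,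
    ENNReal.tsum_mul_right, ENNReal.tsum_geometric]
  have hlt : ENNReal.ofReal α₁ < 1 := ENNReal.ofReal_lt_one.2 hα₁'
  exact ENNReal.mul_ne_top (ENNReal.inv_ne_top.2 (tsub_pos_of_lt hlt).ne') ENNReal.ofReal_ne_top

theorem map_archSolution_shift [IsProbabilityMeasure P] (hεindep : iIndepFun ε P)
    (hεident : ∀ t, IdentDistrib (ε t) (ε 0) P P)
    (hLshift : ∀ k, IdentDistrib (fun ω t => L (t + k) ω) (fun ω t => L t ω) P P)
    (hindep : IndepFun (fun ω t => ε t ω) (fun ω t => L t ω) P) (k : ℤ) :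
    Measure.map (fun ω t => archSolution α₀ α₁ l₁ (ε · ω) (L · ω) (t + k)) P =
      Measure.map (fun ω => archSolution α₀ α₁ l₁ (ε · ω) (L · ω)) P := by
  convert ((identDistrib_prodMk_shift hεindep hεident hLshift hindep k).comp
    (measurable_archSolution α₀ α₁ l₁)).map_eq using 2
  · funext ω t
    exact (archSolution_shift k t).symm
  · rfl

end Probability

theorem stmt_6_general {Ω : Type*} [MeasurableSpace Ω] (P : Measure Ω) [IsProbabilityMeasure P]
    (ε L : ℤ → Ω → ℝ) (α₀ α₁ l₁ : ℝ)
    (hα₀ : 0 ≤ α₀) (hα₁ : 0 < α₁) (hl₁ : 0 < l₁) (hα₁' : α₁ < 1)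
    (hεmeas : ∀ t, Measurable (ε t))
    (hLmeas : ∀ t, Measurable (L t))
    -- (ε_t) is i.i.d. with mean 0 and unit second moment
    (hεindep : iIndepFun (m := fun _ : ℤ => (inferInstance : MeasurableSpace ℝ)) ε P)
    (hεident : ∀ t : ℤ, Measure.map (ε t) P = Measure.map (ε 0) P)
    (hεm2 : ∫ ω, (ε 0 ω) ^ 2 ∂P = 1)
    -- (L_t) is strictly stationary, positive, mean one, square integrable
    (hLpos : ∀ t, ∀ ω, 0 < L t ω)
    (hLstat : ∀ k : ℤ, Measure.map (fun ω => fun t => L (t + k) ω) P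
      = Measure.map (fun ω => fun t => L t ω) P)
    (hLmean : ∫ ω, L 0 ω ∂P = 1)
    -- (L_t) is independent of (ε_t)
    (hindep : IndepFun (fun ω => fun t : ℤ => ε t ω) (fun ω => fun t : ℤ => L t ω) P)
    -- the candidate solution
    (σsq : ℤ → Ω → ℝ)
    (hσ : ∀ t : ℤ, ∀ ω, σsq t ω =
      ∑' i : ℕ, (∏ j ∈ Finset.range i, α₁ * (ε (t - 1 - j) ω) ^ 2)
        * (α₀ + l₁ * L (t - 1 - i) ω)) :
    -- the series converges a.s.
    (∀ t : ℤ, ∀ᵐ ω ∂P, Summable (fun i : ℕ =>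
      (∏ j ∈ Finset.range i, α₁ * (ε (t - 1 - j) ω) ^ 2) * (α₀ + l₁ * L (t - 1 - i) ω))) ∧
    -- it satisfies the recursion a.s.
    (∀ᵐ ω ∂P, ∀ t : ℤ, σsq (t + 1) ω = α₁ * (ε t ω) ^ 2 * σsq t ω + α₀ + l₁ * L t ω) ∧
    -- and it is strictly stationary
    (∀ k : ℤ, Measure.map (fun ω => fun t : ℤ => σsq (t + k) ω) P
      = Measure.map (fun ω => fun t : ℤ => σsq t ω) P) := by
  have hσ' : ∀ t ω, σsq t ω = archSolution α₀ α₁ l₁ (ε · ω) (L · ω) t := hσ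
  have hLnonneg : ∀ t ω, 0 ≤ L t ω := fun t ω => (hLpos t ω).le
  have hεid : ∀ t, IdentDistrib (ε t) (ε 0) P P := fun t =>
    ⟨(hεmeas t).aemeasurable, (hεmeas 0).aemeasurable, hεident t⟩
  have hLshift : ∀ k, IdentDistrib (fun ω t => L (t + k) ω) (fun ω t => L t ω) P P := fun k =>
    ⟨by fun_prop, by fun_prop, hLstat k⟩
  have hLid : ∀ s, IdentDistrib (L s) (L 0) P P := fun s => by
    simpa [Function.comp_def] using (hLshift s).comp (measurable_pi_apply 0)
  have hε2 := lintegral_ofReal_eq_one_of_identDistrib (measurable_id.pow_const 2) hεid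
    (fun ω => sq_nonneg _) hεm2
  have hL1 := lintegral_ofReal_eq_one_of_identDistrib measurable_id hLid (hLnonneg 0) hLmean
  have hsum := ae_summable_archTerm hα₀ hα₁.le hl₁.le hα₁' hεmeas hLmeas hLnonneg hεindep hindep
    hε2 hL1
  refine ⟨hsum, ae_all_iff.2 fun t => ?_, fun k => ?_⟩
  · filter_upwards [hsum (t + 1)] with ω hω
    rw [hσ', hσ', archSolution_succ hω]
  · simp only [hσ']
    exact map_archSolution_shift hεindep hεid hLshift hindep k

/-- Existence of a strictly stationary solution of the generalized ARCH model
`σ_{t+1}² = α₁ ε_t² σ_t² + α₀ + l₁ L_t`, given by the random series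
`σ_{t+1}² = ∑_{i=0}^∞ (∏_{j=0}^{i-1} α₁ ε_{t-j}²)(α₀ + l₁ L_{t-i})`. -/
theorem stmt_6 {Ω : Type*} [MeasurableSpace Ω] (P : Measure Ω) [IsProbabilityMeasure P]
    (ε L : ℤ → Ω → ℝ) (α₀ α₁ l₁ : ℝ)
    (hα₀ : 0 ≤ α₀) (hα₁ : 0 < α₁) (hl₁ : 0 < l₁) (hα₁' : α₁ < 1)
    (hεmeas : ∀ t, Measurable (ε t))
    (hLmeas : ∀ t, Measurable (L t))
    -- (ε_t) is i.i.d. with mean 0 and unit second moment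
    (hεindep : iIndepFun (m := fun _ : ℤ => (inferInstance : MeasurableSpace ℝ)) ε P)
    (hεident : ∀ t : ℤ, Measure.map (ε t) P = Measure.map (ε 0) P)
    (hεmean : ∫ ω, ε 0 ω ∂P = 0)
    (hεm2 : ∫ ω, (ε 0 ω) ^ 2 ∂P = 1)
    -- (L_t) is strictly stationary, positive, mean one, square integrable
    (hLpos : ∀ t, ∀ ω, 0 < L t ω)
    (hLstat : ∀ k : ℤ, Measure.map (fun ω => fun t => L (t + k) ω) P
      = Measure.map (fun ω => fun t => L t ω) P)
    (hLmean : ∫ ω, L 0 ω ∂P = 1)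
    (hL2 : MemLp (L 0) 2 P)
    -- (L_t) is independent of (ε_t)
    (hindep : IndepFun (fun ω => fun t : ℤ => ε t ω) (fun ω => fun t : ℤ => L t ω) P)
    -- the candidate solution
    (σsq : ℤ → Ω → ℝ)
    (hσ : ∀ t : ℤ, ∀ ω, σsq t ω =
      ∑' i : ℕ, (∏ j ∈ Finset.range i, α₁ * (ε (t - 1 - j) ω) ^ 2)
        * (α₀ + l₁ * L (t - 1 - i) ω)) :
    -- the series converges a.s.
    (∀ t : ℤ, ∀ᵐ ω ∂P, Summable (fun i : ℕ =>
      (∏ j ∈ Finset.range i, α₁ * (ε (t - 1 - j) ω) ^ 2) * (α₀ + l₁ * L (t - 1 - i) ω))) ∧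
    -- it satisfies the recursion a.s.
    (∀ᵐ ω ∂P, ∀ t : ℤ, σsq (t + 1) ω = α₁ * (ε t ω) ^ 2 * σsq t ω + α₀ + l₁ * L t ω) ∧
    -- and it is strictly stationary
    (∀ k : ℤ, Measure.map (fun ω => fun t : ℤ => σsq (t + k) ω) P
      = Measure.map (fun ω => fun t : ℤ => σsq t ω) P) :=
  stmt_6_general P ε L α₀ α₁ l₁ hα₀ hα₁ hl₁ hα₁' hεmeas hLmeas hεindep hεident hεm2 hLpos hLstat
    hLmean hindep σsq hσ
end

section
/- Under the assumptions α_1 < 1 and E[L_0²] < ∞, the generalized ARCH recursion σ_{t+1}² = α_1 ε_t² σ_t² + α_0 + l_1 L_t has a unique solution in the class of processes satisfying sup_{t∈ℤ} E[σ_t²] < ∞, namely σ_{t+1}² = ∑_{i=0}^∞ (∏_{j=0}^{i−1} α_1 ε_{t−j}²)(α_0 + l_1 L_{t−i}). -/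
open MeasureTheory Filter ProbabilityTheory Finset Topology

/-!
Iterating the recursion `k` steps back writes `τ_t` as the `k`-th partial sum of the series plus
the remainder `R_k = (∏_{j<k} α₁ ε_{t-1-j}²) τ_{t-k}`. All terms are nonnegative, so the series
converges and `0 ≤ τ_t - ∑ ≤ R_k` for every `k`. Since `τ_{t-k}` is independent of the innovations
in the product, `E[R_k] = α₁^k E[τ_{t-k}] ≤ α₁^k M → 0`, and a nonnegative variable dominated by
variables of arbitrarily small mean vanishes almost surely.
-/

theorem eq_sum_range_prod_mul_add_prod_mul {R : Type*} [CommSemiring R] {x a b : ℤ → R}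
    (hx : ∀ s, x (s + 1) = a s * x s + b s) (t : ℤ) (k : ℕ) :
    x t = ∑ i ∈ range k, (∏ j ∈ range i, a (t - 1 - j)) * b (t - 1 - i)
      + (∏ j ∈ range k, a (t - 1 - j)) * x (t - k) := by
  induction k with
  | zero => simp
  | succ k ih =>
    have hstep := hx (t - 1 - k)
    rw [show t - 1 - (k : ℤ) + 1 = t - k by ring] at hstep
    rw [ih, hstep, sum_range_succ, prod_range_succ,
      show t - ((k + 1 : ℕ) : ℤ) = t - 1 - k by push_cast; ring]
    ring

theorem sub_tsum_mem_Icc_of_eq_sum_range_add {g r : ℕ → ℝ} {x : ℝ} (hg : ∀ i, 0 ≤ g i)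
    (hr : ∀ k, 0 ≤ r k) (hx : ∀ k, x = ∑ i ∈ range k, g i + r k) (k : ℕ) :
    x - ∑' i, g i ∈ Set.Icc 0 (r k) := by
  have hpartial : ∀ n, ∑ i ∈ range n, g i ≤ x := fun n => by linarith [hx n, hr n]
  constructor
  · linarith [Real.tsum_le_of_sum_range_le hg hpartial]
  · linarith [hx k, (summable_of_sum_range_le hg hpartial).sum_le_tsum (range k) fun i _ => hg i]

section Probability

variable {Ω : Type*} [MeasurableSpace Ω] {μ : Measure Ω}

theorem ae_eq_zero_of_mem_Icc_of_tendsto_integral {F : Ω → ℝ} {R : ℕ → Ω → ℝ}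
    (hF : AEStronglyMeasurable F μ) (hR : ∀ k, Integrable (R k) μ)
    (hFR : ∀ k, ∀ᵐ ω ∂μ, F ω ∈ Set.Icc 0 (R k ω))
    (hlim : Tendsto (fun k => ∫ ω, R k ω ∂μ) atTop (𝓝 0)) : F =ᵐ[μ] 0 := by
  have hF0 : 0 ≤ᵐ[μ] F := (hFR 0).mono fun ω h => h.1
  have hFint : Integrable F μ := (hR 0).mono' hF <| (hFR 0).mono fun ω h => by
    rw [Real.norm_eq_abs, abs_of_nonneg h.1]
    exact h.2
  have hle : ∀ k, ∫ ω, F ω ∂μ ≤ ∫ ω, R k ω ∂μ := fun k =>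
    integral_mono_ae hFint (hR k) ((hFR k).mono fun ω h => h.2)
  refine (integral_eq_zero_iff_of_nonneg_ae hF0 hFint).mp
    (le_antisymm ?_ (integral_nonneg_of_ae hF0))
  exact ge_of_tendsto hlim (Eventually.of_forall hle)

theorem integral_prod_range_comp_eq_pow {ι : Type*} {Y : ι → Ω → ℝ} (hY : iIndepFun Y μ)
    (hYm : ∀ i, AEStronglyMeasurable (Y i) μ) {c : ℝ} (hc : ∀ i, ∫ ω, Y i ω ∂μ = c)
    {f : ℕ → ι} (hf : Function.Injective f) (k : ℕ) :
    ∫ ω, ∏ j ∈ range k, Y (f j) ω ∂μ = c ^ k := by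
  have hinj : Function.Injective fun j : Fin k => f j := fun i j h => Fin.ext (hf h)
  have h := (hY.precomp hinj).integral_fun_prod_eq_prod_integral fun j => hYm _
  simp only [hc, prod_const, card_univ, Fintype.card_fin] at h
  simpa only [← Fin.prod_univ_eq_prod_range (fun j => Y (f j) _)] using h

theorem ae_eq_tsum_of_eq_sum_range_add {x : Ω → ℝ} {g R : ℕ → Ω → ℝ} (hx : Integrable x μ)
    (hg : ∀ i, AEMeasurable (g i) μ) (hRm : ∀ k, AEStronglyMeasurable (R k) μ)
    (hg0 : ∀ i ω, 0 ≤ g i ω) (hR0 : ∀ k ω, 0 ≤ R k ω)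
    (hdecomp : ∀ᵐ ω ∂μ, ∀ k, x ω = ∑ i ∈ range k, g i ω + R k ω)
    (hlim : Tendsto (fun k => ∫ ω, R k ω ∂μ) atTop (𝓝 0)) :
    x =ᵐ[μ] fun ω => ∑' i, g i ω := by
  have hR : ∀ k, Integrable (R k) μ := fun k =>
    hx.mono' (hRm k) <| hdecomp.mono fun ω h => by
      rw [Real.norm_eq_abs, abs_of_nonneg (hR0 k ω)]
      linarith [h k, sum_nonneg fun i (_ : i ∈ range k) => hg0 i ω]
  have hF := ae_eq_zero_of_mem_Icc_of_tendsto_integral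
    (hx.1.sub (AEMeasurable.tsum hg).aestronglyMeasurable) hR
    (fun k => hdecomp.mono fun ω h =>
      sub_tsum_mem_Icc_of_eq_sum_range_add (hg0 · ω) (hR0 · ω) h k) hlim
  filter_upwards [hF] with ω h using sub_eq_zero.mp h

end Probability

theorem stmt_7_general {Ω : Type*} [MeasurableSpace Ω] (P : Measure Ω) [IsProbabilityMeasure P]
    (ε L : ℤ → Ω → ℝ) (α₀ α₁ l₁ : ℝ)
    (hα₀ : 0 ≤ α₀) (hα₁ : 0 < α₁) (hl₁ : 0 < l₁) (hα₁' : α₁ < 1)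
    (hεmeas : ∀ t, Measurable (ε t))
    (hLmeas : ∀ t, Measurable (L t))
    -- (ε_t) is i.i.d. with mean 0 and unit second moment
    (hεindep : iIndepFun ε P)
    (hεident : ∀ t : ℤ, Measure.map (ε t) P = Measure.map (ε 0) P)
    (hεm2 : ∫ ω, (ε 0 ω) ^ 2 ∂P = 1)
    -- (L_t) is strictly stationary, positive, mean one, square integrable
    (hLpos : ∀ t, ∀ ω, 0 < L t ω)
    -- τ is any solution of the recursion with uniformly bounded means
    (τ : ℤ → Ω → ℝ)
    (hτmeas : ∀ t, Measurable (τ t))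
    (hτpos : ∀ t, ∀ ω, 0 ≤ τ t ω)
    (hτint : ∀ t, Integrable (τ t) P)
    (hτbdd : ∃ M : ℝ, ∀ t : ℤ, ∫ ω, τ t ω ∂P ≤ M)
    (hτrec : ∀ᵐ ω ∂P, ∀ t : ℤ, τ (t + 1) ω = α₁ * (ε t ω) ^ 2 * τ t ω + α₀ + l₁ * L t ω)
    -- τ_{t-k} is independent of the innovations ε_{t-k}, ..., ε_t
    (hτindep : ∀ (t : ℤ) (k : ℕ), IndepFun (τ (t - k))
      (fun ω => ∏ i ∈ Finset.range (k + 1), α₁ * (ε (t - i) ω) ^ 2) P) :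
    -- then τ coincides a.s. with the random series solution
    ∀ t : ℤ, τ t =ᵐ[P]
      fun ω => ∑' i : ℕ, (∏ j ∈ Finset.range i, α₁ * (ε (t - 1 - j) ω) ^ 2)
        * (α₀ + l₁ * L (t - 1 - i) ω) := by
  intro t
  obtain ⟨M, hM⟩ := hτbdd
  let a : ℤ → Ω → ℝ := fun s ω => α₁ * ε s ω ^ 2
  let g : ℕ → Ω → ℝ := fun i ω => (∏ j ∈ range i, a (t - 1 - j) ω) * (α₀ + l₁ * L (t - 1 - i) ω)
  let R : ℕ → Ω → ℝ := fun k ω => (∏ j ∈ range k, a (t - 1 - j) ω) * τ (t - k) ω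
  have hg : ∀ i ω, 0 ≤ g i ω := fun i ω => by have := hLpos (t - 1 - i) ω; positivity
  have hR : ∀ k ω, 0 ≤ R k ω := fun k ω => by have := hτpos (t - k) ω; positivity
  have hdecomp : ∀ᵐ ω ∂P, ∀ k, τ t ω = ∑ i ∈ range k, g i ω + R k ω := by
    filter_upwards [hτrec] with ω hrec
    exact eq_sum_range_prod_mul_add_prod_mul (x := (τ · ω)) (a := (a · ω))
      (b := fun s => α₀ + l₁ * L s ω) (fun s => by rw [hrec s]; ring) t
  have hamean : ∀ s, ∫ ω, a s ω ∂P = α₁ := fun s => by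
    have hsq : ∫ ω, ε s ω ^ 2 ∂P = ∫ ω, ε 0 ω ^ 2 ∂P :=
      (IdentDistrib.comp ⟨(hεmeas s).aemeasurable, (hεmeas 0).aemeasurable, hεident s⟩
        (u := fun x : ℝ => x ^ 2) (by fun_prop)).integral_eq
    rw [integral_const_mul, hsq, hεm2, mul_one]
  have hRmean : ∀ k, ∫ ω, R (k + 1) ω ∂P = α₁ ^ (k + 1) * ∫ ω, τ (t - 1 - k) ω ∂P := by
    intro k
    have hshift : t - ((k + 1 : ℕ) : ℤ) = t - 1 - k := by push_cast; ring
    simp only [R, hshift]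
    rw [(hτindep (t - 1) k).symm.integral_fun_mul_eq_mul_integral (by fun_prop) (by fun_prop),
      integral_prod_range_comp_eq_pow (Y := a)
        (hεindep.comp (fun _ x => α₁ * x ^ 2) fun _ => by fun_prop) (fun _ => by fun_prop)
        hamean (f := fun j : ℕ => t - 1 - j) (fun i j h => by simpa using h)]
  have hlim : Tendsto (fun k => ∫ ω, R k ω ∂P) atTop (𝓝 0) := by
    refine (tendsto_add_atTop_iff_nat 1).mp <| squeeze_zero (fun k => integral_nonneg (hR _))
      (fun k => (hRmean k).trans_le (mul_le_mul_of_nonneg_left (hM _) (by positivity))) ?_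
    simpa using ((tendsto_pow_atTop_nhds_zero_of_lt_one hα₁.le hα₁').comp
      (tendsto_add_atTop_nat 1)).mul_const M
  exact ae_eq_tsum_of_eq_sum_range_add (hτint t) (fun i => by fun_prop) (fun k => by fun_prop)
    hg hR hdecomp hlim

/-- Uniqueness of the solution, within the class sup_t E[σ_t²] < ∞, of the generalized ARCH model
`σ_{t+1}² = α₁ ε_t² σ_t² + α₀ + l₁ L_t`, given by the random series
`σ_{t+1}² = ∑_{i=0}^∞ (∏_{j=0}^{i-1} α₁ ε_{t-j}²)(α₀ + l₁ L_{t-i})`. -/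
theorem stmt_7 {Ω : Type*} [MeasurableSpace Ω] (P : Measure Ω) [IsProbabilityMeasure P]
    (ε L : ℤ → Ω → ℝ) (α₀ α₁ l₁ : ℝ)
    (hα₀ : 0 ≤ α₀) (hα₁ : 0 < α₁) (hl₁ : 0 < l₁) (hα₁' : α₁ < 1)
    (hεmeas : ∀ t, Measurable (ε t))
    (hLmeas : ∀ t, Measurable (L t))
    -- (ε_t) is i.i.d. with mean 0 and unit second moment
    (hεindep : iIndepFun ε P)
    (hεident : ∀ t : ℤ, Measure.map (ε t) P = Measure.map (ε 0) P)
    (hεmean : ∫ ω, ε 0 ω ∂P = 0)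
    (hεm2 : ∫ ω, (ε 0 ω) ^ 2 ∂P = 1)
    -- (L_t) is strictly stationary, positive, mean one, square integrable
    (hLpos : ∀ t, ∀ ω, 0 < L t ω)
    (hLstat : ∀ k : ℤ, Measure.map (fun ω => fun t => L (t + k) ω) P
      = Measure.map (fun ω => fun t => L t ω) P)
    (hLmean : ∫ ω, L 0 ω ∂P = 1)
    (hL2 : MemLp (L 0) 2 P)
    -- (L_t) is independent of (ε_t)
    (hindep : IndepFun (fun ω => fun t : ℤ => ε t ω) (fun ω => fun t : ℤ => L t ω) P)
    -- τ is any solution of the recursion with uniformly bounded means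
    (τ : ℤ → Ω → ℝ)
    (hτmeas : ∀ t, Measurable (τ t))
    (hτpos : ∀ t, ∀ ω, 0 ≤ τ t ω)
    (hτint : ∀ t, Integrable (τ t) P)
    (hτbdd : ∃ M : ℝ, ∀ t : ℤ, ∫ ω, τ t ω ∂P ≤ M)
    (hτrec : ∀ᵐ ω ∂P, ∀ t : ℤ, τ (t + 1) ω = α₁ * (ε t ω) ^ 2 * τ t ω + α₀ + l₁ * L t ω)
    -- τ_{t-k} is independent of the innovations ε_{t-k}, ..., ε_t
    (hτindep : ∀ (t : ℤ) (k : ℕ), IndepFun (τ (t - k))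
      (fun ω => ∏ i ∈ Finset.range (k + 1), α₁ * (ε (t - i) ω) ^ 2) P) :
    -- then τ coincides a.s. with the random series solution
    ∀ t : ℤ, τ t =ᵐ[P]
      fun ω => ∑' i : ℕ, (∏ j ∈ Finset.range i, α₁ * (ε (t - 1 - j) ω) ^ 2)
        * (α₀ + l₁ * L (t - 1 - i) ω) :=
  stmt_7_general P ε L α₀ α₁ l₁ hα₀ hα₁ hl₁ hα₁' hεmeas hLmeas hεindep hεident hεm2 hLpos τ hτmeas
    hτpos hτint hτbdd hτrec hτindep
end

section
/- Suppose α_1 < 1/√(E[ε_0⁴]) and sup_{t∈ℤ} E[σ_t⁴] ≤ M_2 < ∞ in the generalized ARCH model with A_t = α_1 ε_t². Then (∏_{i=0}^{k} A_{t−i}) σ_{t−k}² → 0 almost surely as k → ∞. -/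
open MeasureTheory Filter ProbabilityTheory Topology

/-!
By independence, `E[(∏_{i ≤ k} A_{t-i}) σ²_{t-k}] = α₁^{k+1} E[σ²_{t-k}] ≤ α₁^{k+1} M₁`, and
`α₁ < 1` because `E[ε₀⁴] ≥ (E[ε₀²])² = 1`. So the terms, which are nonnegative, have summable
expectations; hence their sum is almost surely finite, and they tend to `0` almost surely.
-/

theorem MeasureTheory.ae_tendsto_zero_of_summable_integral_norm {α E : Type*} [MeasurableSpace α]
    {μ : Measure α} [NormedAddCommGroup E] {f : ℕ → α → E} (hf : ∀ n, Integrable (f n) μ)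
    (hs : Summable fun n ↦ ∫ x, ‖f n x‖ ∂μ) :
    ∀ᵐ x ∂μ, Tendsto (fun n ↦ f n x) atTop (𝓝 0) := by
  have hfin : ∑' n, eLpNorm (f n) 1 μ ≠ ⊤ := by
    have h n : eLpNorm (f n) 1 μ = ENNReal.ofReal (∫ x, ‖f n x‖ ∂μ) := by
      rw [eLpNorm_one_eq_lintegral_enorm, ofReal_integral_norm_eq_lintegral_enorm (hf n)]
    simp_rw [h, ← ENNReal.ofReal_tsum_of_nonneg (fun n ↦ integral_nonneg fun _ ↦ norm_nonneg _) hs]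
    exact ENNReal.ofReal_ne_top
  filter_upwards [summable_norm_of_tsum_eLpNorm_ne_top le_rfl (fun n ↦ (hf n).1) hfin] with x hx
  exact tendsto_zero_iff_norm_tendsto_zero.2 hx.tendsto_atTop_zero

namespace ProbabilityTheory

variable {Ω ι : Type*} [MeasurableSpace Ω] {μ : Measure Ω}

theorem sq_integral_le_integral_sq [IsProbabilityMeasure μ] {Z : Ω → ℝ} (hZ : MemLp Z 2 μ) :
    (∫ ω, Z ω ∂μ) ^ 2 ≤ ∫ ω, Z ω ^ 2 ∂μ := by
  have := variance_nonneg Z μ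
  rw [variance_eq_sub hZ] at this
  simpa [sub_nonneg] using this

variable {X : ι → Ω → ℝ}

theorem iIndepFun.integrable_fun_finsetProd (hX : iIndepFun X μ)
    (hint : ∀ i, Integrable (X i) μ) (s : Finset ι) :
    Integrable (fun ω ↦ ∏ i ∈ s, X i ω) μ := by
  classical
  have := hX.isProbabilityMeasure
  induction s using Finset.induction_on with
  | empty => exact integrable_const 1
  | insert i s hi ih =>
    have hindep := hX.indepFun_finsetProd_of_notMem₀ (fun j ↦ (hint j).aemeasurable) hi
    rw [Finset.prod_fn] at hindep
    simp only [Finset.prod_insert hi]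
    exact hindep.symm.integrable_mul (hint i) ih

theorem iIndepFun.integral_fun_finsetProd_eq_prod_integral
    (hX : iIndepFun X μ) (hmeas : ∀ i, AEStronglyMeasurable (X i) μ) (s : Finset ι) :
    ∫ ω, ∏ i ∈ s, X i ω ∂μ = ∏ i ∈ s, ∫ ω, X i ω ∂μ := by
  calc ∫ ω, ∏ i ∈ s, X i ω ∂μ = ∫ ω, ∏ i : s, X i ω ∂μ := by
        congr 1 with ω; exact (Finset.prod_coe_sort s (X · ω)).symm
    _ = ∏ i : s, ∫ ω, X i ω ∂μ :=
        (hX.precomp Subtype.val_injective).integral_fun_prod_eq_prod_integral fun i ↦ hmeas i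
    _ = ∏ i ∈ s, ∫ ω, X i ω ∂μ := Finset.prod_coe_sort s fun i ↦ ∫ ω, X i ω ∂μ

theorem iIndepFun.integral_fun_finsetProd_mul_eq (hX : iIndepFun X μ)
    (hint : ∀ i, Integrable (X i) μ) {Y : Ω → ℝ} (hY : AEStronglyMeasurable Y μ) {s : Finset ι}
    (hXY : IndepFun (fun ω ↦ ∏ i ∈ s, X i ω) Y μ) :
    ∫ ω, (∏ i ∈ s, X i ω) * Y ω ∂μ = (∏ i ∈ s, ∫ ω, X i ω ∂μ) * ∫ ω, Y ω ∂μ := by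
  rw [hXY.integral_fun_mul_eq_mul_integral (hX.integrable_fun_finsetProd hint s).1 hY,
    hX.integral_fun_finsetProd_eq_prod_integral fun i ↦ (hint i).1]

end ProbabilityTheory

theorem stmt_9_general {Ω : Type*} [MeasurableSpace Ω] (P : Measure Ω) [IsProbabilityMeasure P]
    (ε : ℤ → Ω → ℝ) (σsq : ℤ → Ω → ℝ) (α₁ M₁ : ℝ)
    (hα₁ : 0 < α₁) (hεm4 : Integrable (fun ω => (ε 0 ω) ^ 4) P)
    (hα₁' : α₁ < 1 / Real.sqrt (∫ ω, (ε 0 ω) ^ 4 ∂P))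
    (hεmeas : ∀ t, Measurable (ε t))
    (hεindep : iIndepFun ε P)
    (hεident : ∀ t : ℤ, Measure.map (ε t) P = Measure.map (ε 0) P)
    (hεm2 : ∫ ω, (ε 0 ω) ^ 2 ∂P = 1)
    (hσpos : ∀ t, ∀ ω, 0 ≤ σsq t ω)
    (hσint : ∀ t, Integrable (σsq t) P)
    (hσbdd : ∀ t : ℤ, ∫ ω, σsq t ω ∂P ≤ M₁)
    -- σ_{t-k}² is independent of ε_{t-k}, ..., ε_t
    (hσindep : ∀ (t : ℤ) (k : ℕ), IndepFun (σsq (t - k))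
      (fun ω => ∏ i ∈ Finset.range (k + 1), α₁ * (ε (t - i) ω) ^ 2) P) :
    ∀ t : ℤ, ∀ᵐ ω ∂P, Tendsto (fun k : ℕ =>
        (∏ i ∈ Finset.range (k + 1), α₁ * (ε (t - i) ω) ^ 2) * σsq (t - k) ω)
      atTop (nhds 0) := by
  intro t
  have hε0sq : MemLp (fun ω ↦ ε 0 ω ^ 2) 2 P :=
    (memLp_two_iff_integrable_sq ((hεmeas 0).pow_const 2).aestronglyMeasurable).2 <| by
      simpa only [← pow_mul] using hεm4
  have hα₁_lt_one : α₁ < 1 := by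
    have h4 : 1 ≤ ∫ ω, ε 0 ω ^ 4 ∂P := by
      simpa only [hεm2, one_pow, ← pow_mul] using sq_integral_le_integral_sq hε0sq
    refine hα₁'.trans_le ?_
    rw [div_le_one (by positivity)]
    exact Real.one_le_sqrt.2 h4
  have hu : Measurable fun x : ℝ ↦ α₁ * x ^ 2 := by fun_prop
  set A : ℕ → Ω → ℝ := fun i ω ↦ α₁ * ε (t - i) ω ^ 2
  have hA_indep : iIndepFun A P :=
    (hεindep.comp _ fun _ ↦ hu).precomp ((sub_right_injective (b := t)).comp Nat.cast_injective)
  have hA_dist i : IdentDistrib (A i) (fun ω ↦ α₁ * ε 0 ω ^ 2) P P :=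
    (IdentDistrib.mk (hεmeas _).aemeasurable (hεmeas 0).aemeasurable (hεident _)).comp hu
  have hA_int i : Integrable (A i) P :=
    (hA_dist i).integrable_iff.2 ((hε0sq.integrable one_le_two).const_mul α₁)
  have hA_mean i : ∫ ω, A i ω ∂P = α₁ := by
    rw [(hA_dist i).integral_eq, integral_const_mul, hεm2, mul_one]
  have hX_int k : Integrable
      (fun ω ↦ (∏ i ∈ Finset.range (k + 1), A i ω) * σsq (t - k) ω) P :=
    (hσindep t k).symm.integrable_mul (hA_indep.integrable_fun_finsetProd hA_int _) (hσint _)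
  have hX_norm k : ∫ ω, ‖(∏ i ∈ Finset.range (k + 1), A i ω) * σsq (t - k) ω‖ ∂P ≤
      α₁ ^ (k + 1) * M₁ := calc
    _ = ∫ ω, (∏ i ∈ Finset.range (k + 1), A i ω) * σsq (t - k) ω ∂P :=
      integral_congr_ae <| ae_of_all _ fun ω ↦ Real.norm_of_nonneg <|
        mul_nonneg (Finset.prod_nonneg fun i _ ↦ by positivity) (hσpos _ _)
    _ = α₁ ^ (k + 1) * ∫ ω, σsq (t - k) ω ∂P := by
      rw [hA_indep.integral_fun_finsetProd_mul_eq hA_int (hσint _).1 (hσindep t k).symm]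
      simp only [hA_mean, Finset.prod_const, Finset.card_range]
    _ ≤ α₁ ^ (k + 1) * M₁ := by gcongr; exact hσbdd _
  refine ae_tendsto_zero_of_summable_integral_norm hX_int <|
    Summable.of_nonneg_of_le (fun k ↦ integral_nonneg fun _ ↦ norm_nonneg _) hX_norm ?_
  exact ((summable_nat_add_iff 1).2 (summable_geometric_of_lt_one hα₁.le hα₁_lt_one)).mul_right M₁

/-- If `α₁ < 1/√(E[ε₀⁴])` and `sup_t E[σ_t⁴] ≤ M₂ < ∞`, then
`(∏_{i=0}^k A_{t-i}) σ_{t-k}² → 0` almost surely as `k → ∞`, where `A_t = α₁ ε_t²`. -/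
theorem stmt_9 {Ω : Type*} [MeasurableSpace Ω] (P : Measure Ω) [IsProbabilityMeasure P]
    (ε : ℤ → Ω → ℝ) (σsq : ℤ → Ω → ℝ) (α₁ M₁ M₂ : ℝ)
    (hα₁ : 0 < α₁) (hεm4 : Integrable (fun ω => (ε 0 ω) ^ 4) P)
    (hα₁' : α₁ < 1 / Real.sqrt (∫ ω, (ε 0 ω) ^ 4 ∂P))
    (hεmeas : ∀ t, Measurable (ε t))
    (hεindep : iIndepFun ε P)
    (hεident : ∀ t : ℤ, Measure.map (ε t) P = Measure.map (ε 0) P)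
    (hεm2 : ∫ ω, (ε 0 ω) ^ 2 ∂P = 1)
    (hσmeas : ∀ t, Measurable (σsq t))
    (hσpos : ∀ t, ∀ ω, 0 ≤ σsq t ω)
    (hσint : ∀ t, Integrable (σsq t) P)
    (hσbdd : ∀ t : ℤ, ∫ ω, σsq t ω ∂P ≤ M₁)
    (hσ4int : ∀ t, Integrable (fun ω => (σsq t ω) ^ 2) P)
    (hσbdd4 : ∀ t : ℤ, ∫ ω, (σsq t ω) ^ 2 ∂P ≤ M₂)
    -- σ_{t-k}² is independent of ε_{t-k}, ..., ε_t
    (hσindep : ∀ (t : ℤ) (k : ℕ), IndepFun (σsq (t - k))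
      (fun ω => ∏ i ∈ Finset.range (k + 1), α₁ * (ε (t - i) ω) ^ 2) P) :
    ∀ t : ℤ, ∀ᵐ ω ∂P, Tendsto (fun k : ℕ =>
        (∏ i ∈ Finset.range (k + 1), α₁ * (ε (t - i) ω) ^ 2) * σsq (t - k) ω)
      atTop (nhds 0) :=
  stmt_9_general P ε σsq α₁ M₁ hα₁ hεm4 hα₁' hεmeas hεindep hεident hεm2 hσpos hσint hσbdd hσindep
end

section
/- For the stationary generalized ARCH solution, E[σ_t² L_s] = α_0/(1 − α_1) + l_1 ∑_{i=0}^∞ α_1^i f(t − s − i − 1), where f(h) = E[L_0 L_h]. -/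
open MeasureTheory Filter ProbabilityTheory

/-!
All summands of the series `σ²_t L_s = ∑ᵢ (∏_{j<i} α₁ ε²_{t-1-j}) (α₀ + l₁ L_{t-1-i}) L_s` are
nonnegative, so expectation and summation can be interchanged once the expectations are summable.
In the `i`-th summand the product of the `ε²` is independent of the `L`-factor and, by
independence of the `ε_j`, has expectation `1`; stationarity of `L` turns the expectation of the
`L`-factor into `α₀ + l₁ f(t - s - i - 1)`. Since `f` is bounded by `E[L₀²]`, the resulting series
converges, and its constant part is the geometric series `α₀ ∑ α₁ⁱ = α₀ / (1 - α₁)`.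
-/

def StrictlyStationary {Ω ι E : Type*} [MeasurableSpace Ω] [MeasurableSpace E] [Add ι]
    (X : ι → Ω → E) (P : Measure Ω) : Prop :=
  ∀ k, Measure.map (fun ω t => X (t + k) ω) P = Measure.map (fun ω t => X t ω) P

namespace StrictlyStationary

variable {Ω ι E : Type*} [MeasurableSpace Ω] [MeasurableSpace E] [AddGroup ι]
  {P : Measure Ω} {X : ι → Ω → E}

lemma identDistrib_shift (hX : StrictlyStationary X P) (hmeas : ∀ t, Measurable (X t)) (k : ι) :
    IdentDistrib (fun ω t => X (t + k) ω) (fun ω t => X t ω) P P :=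
  ⟨(measurable_pi_lambda _ fun t => hmeas (t + k)).aemeasurable,
    (measurable_pi_lambda _ hmeas).aemeasurable, hX k⟩

lemma identDistrib_eval (hX : StrictlyStationary X P) (hmeas : ∀ t, Measurable (X t)) (a : ι) :
    IdentDistrib (X a) (X 0) P P := by
  simpa [Function.comp_def] using (hX.identDistrib_shift hmeas a).comp (measurable_pi_apply 0)

lemma identDistrib_eval_mul [Mul E] [MeasurableMul₂ E] (hX : StrictlyStationary X P)
    (hmeas : ∀ t, Measurable (X t)) (a b : ι) :
    IdentDistrib (fun ω => X a ω * X b ω) (fun ω => X 0 ω * X (b - a) ω) P P := by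
  simpa [Function.comp_def] using (hX.identDistrib_shift hmeas a).comp
    ((measurable_pi_apply 0).mul (measurable_pi_apply (b - a)))

variable {X : ι → Ω → ℝ}

lemma memLp {p : ENNReal} (hX : StrictlyStationary X P) (hmeas : ∀ t, Measurable (X t))
    (h0 : MemLp (X 0) p P) (a : ι) : MemLp (X a) p P :=
  (hX.identDistrib_eval hmeas a).memLp_iff.2 h0

lemma integral_eq (hX : StrictlyStationary X P) (hmeas : ∀ t, Measurable (X t)) (a : ι) :
    ∫ ω, X a ω ∂P = ∫ ω, X 0 ω ∂P :=
  (hX.identDistrib_eval hmeas a).integral_eq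

lemma integral_mul_eq (hX : StrictlyStationary X P) (hmeas : ∀ t, Measurable (X t)) (a b : ι) :
    ∫ ω, X a ω * X b ω ∂P = ∫ ω, X 0 ω * X (b - a) ω ∂P :=
  (hX.identDistrib_eval_mul hmeas a b).integral_eq

lemma integrable_mul (hX : StrictlyStationary X P) (hmeas : ∀ t, Measurable (X t))
    (h2 : MemLp (X 0) 2 P) (a b : ι) : Integrable (fun ω => X a ω * X b ω) P :=
  (hX.memLp hmeas h2 a).integrable_mul (hX.memLp hmeas h2 b)

lemma integral_mul_le_integral_sq (hX : StrictlyStationary X P) (hmeas : ∀ t, Measurable (X t))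
    (h2 : MemLp (X 0) 2 P) (a b : ι) :
    ∫ ω, X a ω * X b ω ∂P ≤ ∫ ω, X 0 ω ^ 2 ∂P := by
  have hsq (c : ι) : ∫ ω, X c ω ^ 2 ∂P = ∫ ω, X 0 ω ^ 2 ∂P :=
    ((hX.identDistrib_eval hmeas c).comp (measurable_id.pow_const 2)).integral_eq
  have hsq_int (c : ι) : Integrable (fun ω => X c ω ^ 2) P := (hX.memLp hmeas h2 c).integrable_sq
  calc ∫ ω, X a ω * X b ω ∂P ≤ ∫ ω, (X a ω ^ 2 + X b ω ^ 2) / 2 ∂P :=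
        integral_mono (hX.integrable_mul hmeas h2 a b) (((hsq_int a).add (hsq_int b)).div_const 2)
          fun ω => by nlinarith [sq_nonneg (X a ω - X b ω)]
    _ = ∫ ω, X 0 ω ^ 2 ∂P := by
        rw [integral_div, integral_add (hsq_int a) (hsq_int b), hsq a, hsq b]; ring

lemma summable_pow_mul_integral_mul (hX : StrictlyStationary X P)
    (hmeas : ∀ t, Measurable (X t)) (h2 : MemLp (X 0) 2 P) (hnonneg : ∀ t ω, 0 ≤ X t ω)
    {r : ℝ} (hr₀ : 0 ≤ r) (hr₁ : r < 1) (g : ℕ → ι) :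
    Summable fun i => r ^ i * ∫ ω, X 0 ω * X (g i) ω ∂P :=
  ((summable_geometric_of_lt_one hr₀ hr₁).mul_right (∫ ω, X 0 ω ^ 2 ∂P)).of_nonneg_of_le
    (fun i => mul_nonneg (pow_nonneg hr₀ i)
      (integral_nonneg fun ω => mul_nonneg (hnonneg _ ω) (hnonneg _ ω)))
    (fun i => mul_le_mul_of_nonneg_left (hX.integral_mul_le_integral_sq hmeas h2 _ _)
      (pow_nonneg hr₀ i))

lemma integrable_const_add_mul_mul [IsFiniteMeasure P] (hX : StrictlyStationary X P)
    (hmeas : ∀ t, Measurable (X t)) (h2 : MemLp (X 0) 2 P) (c d : ℝ) (a b : ι) :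
    Integrable (fun ω => (c + d * X a ω) * X b ω) P := by
  simp_rw [add_mul, mul_assoc]
  exact (((hX.memLp hmeas h2 b).integrable one_le_two).const_mul c).add
    ((hX.integrable_mul hmeas h2 a b).const_mul d)

lemma integral_const_add_mul_mul [IsFiniteMeasure P] (hX : StrictlyStationary X P)
    (hmeas : ∀ t, Measurable (X t)) (h2 : MemLp (X 0) 2 P) (c d : ℝ) (a b : ι) :
    ∫ ω, (c + d * X a ω) * X b ω ∂P = c * ∫ ω, X 0 ω ∂P + d * ∫ ω, X 0 ω * X (a - b) ω ∂P := by
  simp_rw [add_mul, mul_assoc, mul_comm (X a _)]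
  rw [integral_add (((hX.memLp hmeas h2 b).integrable one_le_two).const_mul c)
      ((hX.integrable_mul hmeas h2 b a).const_mul d),
    integral_const_mul, integral_const_mul, hX.integral_eq hmeas, hX.integral_mul_eq hmeas]

end StrictlyStationary

section Independence

variable {Ω ι : Type*} [MeasurableSpace Ω] {P : Measure Ω} {Y : ι → Ω → ℝ}

lemma ProbabilityTheory.iIndepFun.integrable_finset_prod (hY : iIndepFun Y P)
    (hmeas : ∀ i, Measurable (Y i)) (hint : ∀ i, Integrable (Y i) P) (S : Finset ι) :
    Integrable (fun ω => ∏ i ∈ S, Y i ω) P := by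
  classical
  induction S using Finset.induction_on with
  | empty =>
    have := hY.isProbabilityMeasure
    simp
  | insert i S hi ih =>
    simp_rw [Finset.prod_insert hi, mul_comm (Y i _)]
    exact (Finset.prod_fn S Y ▸ hY.indepFun_finsetProd_of_notMem hmeas hi).integrable_mul
      (by simpa only [Finset.prod_fn] using ih) (hint i)

lemma ProbabilityTheory.iIndepFun.integral_finset_prod (hY : iIndepFun Y P)
    (hmeas : ∀ i, Measurable (Y i)) (hint : ∀ i, Integrable (Y i) P) (S : Finset ι) :
    ∫ ω, ∏ i ∈ S, Y i ω ∂P = ∏ i ∈ S, ∫ ω, Y i ω ∂P := by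
  classical
  induction S using Finset.induction_on with
  | empty =>
    have := hY.isProbabilityMeasure
    simp
  | insert i S hi ih =>
    simp_rw [Finset.prod_insert hi, mul_comm (Y i _), mul_comm (∫ ω, Y i ω ∂P)]
    rw [← ih]
    exact (Finset.prod_fn S Y ▸ hY.indepFun_finsetProd_of_notMem hmeas hi)
      |>.integral_fun_mul_eq_mul_integral
        (hY.integrable_finset_prod hmeas hint S).aestronglyMeasurable (hint i).aestronglyMeasurable

variable {β : Type*} [MeasurableSpace β] {ε : ι → Ω → ℝ} {Z : Ω → β} {G : β → ℝ}

lemma integrable_prod_const_mul_sq_mul (hεmeas : ∀ i, Measurable (ε i)) (hε : iIndepFun ε P)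
    (hε_sq : ∀ i, ∫ ω, ε i ω ^ 2 ∂P = 1) (hεZ : IndepFun (fun ω i => ε i ω) Z P)
    (hG : Measurable G) (hGZ : Integrable (fun ω => G (Z ω)) P) (c : ℝ) (S : Finset ι) :
    Integrable (fun ω => (∏ i ∈ S, c * ε i ω ^ 2) * G (Z ω)) P := by
  have hsq : iIndepFun (fun i ω => ε i ω ^ 2) P := hε.comp _ fun _ => measurable_id.pow_const 2
  have hindep : IndepFun (fun ω => ∏ i ∈ S, ε i ω ^ 2) (fun ω => G (Z ω)) P :=
    hεZ.comp (Finset.measurable_prod S fun i _ => (measurable_pi_apply i).pow_const 2) hG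
  have hprod_int := hsq.integrable_finset_prod (fun i => (hεmeas i).pow_const 2)
    (fun i => .of_integral_ne_zero (by simp [hε_sq i])) S
  simp_rw [Finset.prod_mul_distrib, Finset.prod_const, mul_assoc]
  exact (hindep.integrable_mul hprod_int hGZ).const_mul _

lemma integral_prod_const_mul_sq_mul (hεmeas : ∀ i, Measurable (ε i)) (hε : iIndepFun ε P)
    (hε_sq : ∀ i, ∫ ω, ε i ω ^ 2 ∂P = 1) (hεZ : IndepFun (fun ω i => ε i ω) Z P)
    (hG : Measurable G) (hGZ : AEStronglyMeasurable (fun ω => G (Z ω)) P) (c : ℝ)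
    (S : Finset ι) :
    ∫ ω, (∏ i ∈ S, c * ε i ω ^ 2) * G (Z ω) ∂P = c ^ S.card * ∫ ω, G (Z ω) ∂P := by
  have hsq : iIndepFun (fun i ω => ε i ω ^ 2) P := hε.comp _ fun _ => measurable_id.pow_const 2
  have hindep : IndepFun (fun ω => ∏ i ∈ S, ε i ω ^ 2) (fun ω => G (Z ω)) P :=
    hεZ.comp (Finset.measurable_prod S fun i _ => (measurable_pi_apply i).pow_const 2) hG
  have hprod : ∫ ω, ∏ i ∈ S, ε i ω ^ 2 ∂P = 1 := by
    rw [hsq.integral_finset_prod (fun i => (hεmeas i).pow_const 2)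
      (fun i => .of_integral_ne_zero (by simp [hε_sq i])) S]
    simp [hε_sq]
  simp_rw [Finset.prod_mul_distrib, Finset.prod_const, mul_assoc]
  rw [integral_const_mul, hindep.integral_fun_mul_eq_mul_integral
    (Finset.aestronglyMeasurable_fun_prod S fun i _ => ((hεmeas i).pow_const 2).aestronglyMeasurable)
    hGZ, hprod, one_mul]

end Independence

lemma integral_tsum_of_nonneg {Ω : Type*} [MeasurableSpace Ω] {P : Measure Ω} {F : ℕ → Ω → ℝ}
    (hF_int : ∀ i, Integrable (F i) P) (hF_nonneg : ∀ i, 0 ≤ F i)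
    (hF_sum : Summable fun i => ∫ ω, F i ω ∂P) :
    ∫ ω, ∑' i, F i ω ∂P = ∑' i, ∫ ω, F i ω ∂P := by
  refine (integral_tsum_of_summable_integral_norm hF_int ?_).symm
  simpa only [Real.norm_of_nonneg (hF_nonneg _ _)] using hF_sum

lemma hasSum_pow_mul_const_add_mul {r : ℝ} (hr₀ : 0 ≤ r) (hr₁ : r < 1) {c : ℕ → ℝ}
    (hc : Summable fun i => r ^ i * c i) (a b : ℝ) :
    HasSum (fun i => r ^ i * (a + b * c i)) (a / (1 - r) + b * ∑' i, r ^ i * c i) := by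
  have hf : (fun i => r ^ i * (a + b * c i)) = fun i => a * r ^ i + b * (r ^ i * c i) := by
    ext i; ring
  rw [hf, div_eq_mul_inv]
  exact ((hasSum_geometric_of_lt_one hr₀ hr₁).mul_left a).add (hc.hasSum.mul_left b)

theorem stmt_12_general {Ω : Type*} [MeasurableSpace Ω] (P : Measure Ω) [IsProbabilityMeasure P]
    (ε L : ℤ → Ω → ℝ) (α₀ α₁ l₁ : ℝ)
    (hα₀ : 0 ≤ α₀) (hα₁ : 0 < α₁) (hl₁ : 0 < l₁) (hα₁' : α₁ < 1)
    (hεmeas : ∀ t, Measurable (ε t))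
    (hLmeas : ∀ t, Measurable (L t))
    -- (ε_t) is i.i.d. with mean 0 and unit second moment
    (hεindep : iIndepFun ε P)
    (hεident : ∀ t : ℤ, Measure.map (ε t) P = Measure.map (ε 0) P)
    (hεm2 : ∫ ω, (ε 0 ω) ^ 2 ∂P = 1)
    -- (L_t) is strictly stationary, positive, mean one, square integrable
    (hLpos : ∀ t, ∀ ω, 0 < L t ω)
    (hLstat : ∀ k : ℤ, Measure.map (fun ω => fun t => L (t + k) ω) P
      = Measure.map (fun ω => fun t => L t ω) P)
    (hLmean : ∫ ω, L 0 ω ∂P = 1)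
    (hL2 : MemLp (L 0) 2 P)
    -- (L_t) is independent of (ε_t)
    (hindep : IndepFun (fun ω => fun t : ℤ => ε t ω) (fun ω => fun t : ℤ => L t ω) P)
    -- σsq is the stationary series solution
    (σsq : ℤ → Ω → ℝ)
    (hσ : ∀ t : ℤ, ∀ ω, σsq t ω =
      ∑' i : ℕ, (∏ j ∈ Finset.range i, α₁ * (ε (t - 1 - j) ω) ^ 2)
        * (α₀ + l₁ * L (t - 1 - i) ω))
    :
    ∀ t s : ℤ, ∫ ω, σsq t ω * L s ω ∂P =
      α₀ / (1 - α₁)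
        + l₁ * ∑' i : ℕ, α₁ ^ i * (∫ ω, L 0 ω * L (t - s - i - 1) ω ∂P) := by
  intro t s
  have hL : StrictlyStationary L P := hLstat
  set e : ℕ → Ω → ℝ := fun j => ε (t - 1 - j)
  have he : iIndepFun e P := hεindep.precomp fun j k h => by simpa using h
  have heL : IndepFun (fun ω j => e j ω) (fun ω u => L u ω) P :=
    hindep.comp (measurable_pi_lambda _ fun j => measurable_pi_apply _) measurable_id
  have he_sq (j : ℕ) : ∫ ω, e j ω ^ 2 ∂P = 1 :=
    (IdentDistrib.comp ⟨(hεmeas _).aemeasurable, (hεmeas 0).aemeasurable, hεident _⟩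
      (measurable_id.pow_const 2)).integral_eq.trans hεm2
  set F : ℕ → Ω → ℝ := fun i ω =>
    (∏ j ∈ Finset.range i, α₁ * e j ω ^ 2) * ((α₀ + l₁ * L (t - 1 - i) ω) * L s ω)
  have hG (i : ℕ) : Measurable fun g : ℤ → ℝ => (α₀ + l₁ * g (t - 1 - i)) * g s := by fun_prop
  have hG_int (i : ℕ) := hL.integrable_const_add_mul_mul hLmeas hL2 α₀ l₁ (t - 1 - i) s
  have hF (i : ℕ) :
      ∫ ω, F i ω ∂P = α₁ ^ i * (α₀ + l₁ * ∫ ω, L 0 ω * L (t - s - i - 1) ω ∂P) := by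
    rw [integral_prod_const_mul_sq_mul (fun j => hεmeas _) he he_sq heL (hG i)
      (hG_int i).aestronglyMeasurable, hL.integral_const_add_mul_mul hLmeas hL2, hLmean,
      Finset.card_range, mul_one, show t - 1 - (i : ℤ) - s = t - s - i - 1 by ring]
  have hF_nonneg (i : ℕ) : 0 ≤ F i := fun ω => by
    have := hLpos (t - 1 - i) ω
    have := hLpos s ω
    positivity
  have hsum := hasSum_pow_mul_const_add_mul hα₁.le hα₁'
    (hL.summable_pow_mul_integral_mul hLmeas hL2 (fun u ω => (hLpos u ω).le) hα₁.le hα₁'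
      fun i => t - s - i - 1) α₀ l₁
  calc ∫ ω, σsq t ω * L s ω ∂P = ∫ ω, ∑' i, F i ω ∂P := by
        simp_rw [F, e, hσ, ← tsum_mul_right, mul_assoc]
    _ = ∑' i, ∫ ω, F i ω ∂P :=
        integral_tsum_of_nonneg
          (fun i => integrable_prod_const_mul_sq_mul (fun j => hεmeas _) he he_sq heL (hG i)
            (hG_int i) α₁ _)
          hF_nonneg (by simpa only [hF] using hsum.summable)
    _ = _ := by simpa only [hF] using hsum.tsum_eq

/-- `E[σ_t² L_s] = α₀/(1−α₁) + l₁ ∑ α₁^i f(t−s−i−1)` with `f(h) = E[L₀ L_h]`. -/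
theorem stmt_12 {Ω : Type*} [MeasurableSpace Ω] (P : Measure Ω) [IsProbabilityMeasure P]
    (ε L : ℤ → Ω → ℝ) (α₀ α₁ l₁ : ℝ)
    (hα₀ : 0 ≤ α₀) (hα₁ : 0 < α₁) (hl₁ : 0 < l₁) (hα₁' : α₁ < 1)
    (hεmeas : ∀ t, Measurable (ε t))
    (hLmeas : ∀ t, Measurable (L t))
    -- (ε_t) is i.i.d. with mean 0 and unit second moment
    (hεindep : iIndepFun ε P)
    (hεident : ∀ t : ℤ, Measure.map (ε t) P = Measure.map (ε 0) P)
    (hεmean : ∫ ω, ε 0 ω ∂P = 0)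
    (hεm2 : ∫ ω, (ε 0 ω) ^ 2 ∂P = 1)
    -- (L_t) is strictly stationary, positive, mean one, square integrable
    (hLpos : ∀ t, ∀ ω, 0 < L t ω)
    (hLstat : ∀ k : ℤ, Measure.map (fun ω => fun t => L (t + k) ω) P
      = Measure.map (fun ω => fun t => L t ω) P)
    (hLmean : ∫ ω, L 0 ω ∂P = 1)
    (hL2 : MemLp (L 0) 2 P)
    -- (L_t) is independent of (ε_t)
    (hindep : IndepFun (fun ω => fun t : ℤ => ε t ω) (fun ω => fun t : ℤ => L t ω) P)
    -- σsq is the stationary series solution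
    (σsq : ℤ → Ω → ℝ)
    (hσ : ∀ t : ℤ, ∀ ω, σsq t ω =
      ∑' i : ℕ, (∏ j ∈ Finset.range i, α₁ * (ε (t - 1 - j) ω) ^ 2)
        * (α₀ + l₁ * L (t - 1 - i) ω))
    :
    ∀ t s : ℤ, ∫ ω, σsq t ω * L s ω ∂P =
      α₀ / (1 - α₁)
        + l₁ * ∑' i : ℕ, α₁ ^ i * (∫ ω, L 0 ω * L (t - s - i - 1) ω ∂P) :=
  stmt_12_general P ε L α₀ α₁ l₁ hα₀ hα₁ hl₁ hα₁' hεmeas hLmeas hεindep hεident hεm2 hLpos hLstat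
    hLmean hL2 hindep σsq hσ
end
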